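/- Let μ = μ₁ ⊗ μ₂ and ν = ν₁ ⊗ ν₂ be product probability measures on ℝ^{d₁} × ℝ^{d₂} with finite first moments. Then the 1-Wasserstein distance (with respect to the ℓ¹-type cost given by summing the costs on each factor) decomposes as W₁(μ, ν) = W₁(μ₁, ν₁) + W₁(μ₂, ν₂). -/

import Mathlib

/-!
A coupling of the two products projects, coordinatewise, onto a coupling of `μ₁, ν₁` and a
coupling of `μ₂, ν₂`, and the additive cost splits accordingly; this gives `≥`. Conversely, the
product of a coupling of `μ₁, ν₁` and a coupling of `μ₂, ν₂`, with its coordinates regrouped, is a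
coupling of the products whose cost is the sum of the two costs; this gives `≤`.
-/

open MeasureTheory ENNReal

/-- The 1-Wasserstein (Kantorovich) transport cost: the infimum over couplings
`π` of `μ` and `ν` of the integral of the cost `c`. -/
noncomputable def wassersteinCost {X : Type*} [MeasurableSpace X]
    (c : X → X → ℝ≥0∞) (μ ν : Measure X) : ℝ≥0∞ :=
  ⨅ π ∈ {π : Measure (X × X) |
      π.map Prod.fst = μ ∧ π.map Prod.snd = ν}, ∫⁻ p, c p.1 p.2 ∂π

section Couplings

variable {X Y : Type*} [MeasurableSpace X] [MeasurableSpace Y]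

def couplings (μ ν : Measure X) : Set (Measure (X × X)) :=
  {π | π.map Prod.fst = μ ∧ π.map Prod.snd = ν}

variable {μ ν : Measure X} {π : Measure (X × X)}

lemma wassersteinCost_le_lintegral (c : X → X → ℝ≥0∞) (hπ : π ∈ couplings μ ν) :
    wassersteinCost c μ ν ≤ ∫⁻ p, c p.1 p.2 ∂π :=
  iInf₂_le π hπ

lemma le_wassersteinCost {c : X → X → ℝ≥0∞} {a : ℝ≥0∞}
    (h : ∀ π ∈ couplings μ ν, a ≤ ∫⁻ p, c p.1 p.2 ∂π) : a ≤ wassersteinCost c μ ν :=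
  le_iInf₂ h

lemma isProbabilityMeasure_of_mem_couplings [IsProbabilityMeasure μ] (hπ : π ∈ couplings μ ν) :
    IsProbabilityMeasure π := by
  have : IsProbabilityMeasure (π.map Prod.fst) := hπ.1 ▸ ‹_›
  exact Measure.isProbabilityMeasure_of_map Prod.fst

lemma map_prodMap_mem_couplings {f : X → Y} (hf : Measurable f) (hπ : π ∈ couplings μ ν) :
    π.map (Prod.map f f) ∈ couplings (μ.map f) (ν.map f) := by
  constructor
  · rw [Measure.map_map measurable_fst (hf.prodMap hf), ← hπ.1,
      Measure.map_map hf measurable_fst]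
    rfl
  · rw [Measure.map_map measurable_snd (hf.prodMap hf), ← hπ.2,
      Measure.map_map hf measurable_snd]
    rfl

def prodShuffle (r : (X × X) × (Y × Y)) : (X × Y) × (X × Y) :=
  ((r.1.1, r.2.1), (r.1.2, r.2.2))

lemma measurable_prodShuffle : Measurable (prodShuffle : (X × X) × (Y × Y) → _) := by
  unfold prodShuffle; fun_prop

lemma map_prodShuffle_prod_mem_couplings {μ₁ ν₁ : Measure X} {μ₂ ν₂ : Measure Y}
    {π₁ : Measure (X × X)} {π₂ : Measure (Y × Y)} [SFinite π₁] [SFinite π₂]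
    (hπ₁ : π₁ ∈ couplings μ₁ ν₁) (hπ₂ : π₂ ∈ couplings μ₂ ν₂) :
    (π₁.prod π₂).map prodShuffle ∈ couplings (μ₁.prod μ₂) (ν₁.prod ν₂) := by
  constructor
  · rw [Measure.map_map measurable_fst measurable_prodShuffle, ← hπ₁.1, ← hπ₂.1,
      Measure.map_prod_map _ _ measurable_fst measurable_fst]
    rfl
  · rw [Measure.map_map measurable_snd measurable_prodShuffle, ← hπ₁.2, ← hπ₂.2,
      Measure.map_prod_map _ _ measurable_snd measurable_snd]
    rfl

end Couplings

lemma lintegral_prod_fst_add_snd {α β : Type*} [MeasurableSpace α] [MeasurableSpace β]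
    {μ : Measure α} {ν : Measure β} [IsProbabilityMeasure μ] [IsProbabilityMeasure ν]
    {f : α → ℝ≥0∞} {g : β → ℝ≥0∞} (hf : Measurable f) (hg : Measurable g) :
    ∫⁻ p, f p.1 + g p.2 ∂(μ.prod ν) = ∫⁻ x, f x ∂μ + ∫⁻ y, g y ∂ν := by
  rw [lintegral_add_left (f := fun p : α × β => f p.1) (hf.comp measurable_fst), measurePreserving_fst.lintegral_comp hf,
    measurePreserving_snd.lintegral_comp hg]

theorem wassersteinCost_prod {X Y : Type*} [MeasurableSpace X] [MeasurableSpace Y]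
    {c₁ : X → X → ℝ≥0∞} {c₂ : Y → Y → ℝ≥0∞}
    (hc₁ : Measurable (Function.uncurry c₁)) (hc₂ : Measurable (Function.uncurry c₂))
    (μ₁ ν₁ : Measure X) (μ₂ ν₂ : Measure Y)
    [IsProbabilityMeasure μ₁] [IsProbabilityMeasure ν₁]
    [IsProbabilityMeasure μ₂] [IsProbabilityMeasure ν₂] :
    wassersteinCost (fun p q : X × Y => c₁ p.1 q.1 + c₂ p.2 q.2) (μ₁.prod μ₂) (ν₁.prod ν₂) =
      wassersteinCost c₁ μ₁ ν₁ + wassersteinCost c₂ μ₂ ν₂ := by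
  refine le_antisymm (ENNReal.le_iInf₂_add_iInf₂ fun π₁ hπ₁ π₂ hπ₂ => ?_)
    (le_wassersteinCost fun π hπ => ?_)
  · have := isProbabilityMeasure_of_mem_couplings hπ₁
    have := isProbabilityMeasure_of_mem_couplings hπ₂
    calc _ ≤ ∫⁻ p, c₁ p.1.1 p.2.1 + c₂ p.1.2 p.2.2 ∂((π₁.prod π₂).map prodShuffle) :=
          wassersteinCost_le_lintegral _ (map_prodShuffle_prod_mem_couplings hπ₁ hπ₂)
      _ ≤ ∫⁻ r, c₁ r.1.1 r.1.2 + c₂ r.2.1 r.2.2 ∂(π₁.prod π₂) := lintegral_map_le _ _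
      _ = _ := lintegral_prod_fst_add_snd hc₁ hc₂
  · have hπ₁ : π.map (Prod.map Prod.fst Prod.fst) ∈ couplings μ₁ ν₁ := by
      simpa using map_prodMap_mem_couplings measurable_fst hπ
    have hπ₂ : π.map (Prod.map Prod.snd Prod.snd) ∈ couplings μ₂ ν₂ := by
      simpa using map_prodMap_mem_couplings measurable_snd hπ
    calc _ ≤ ∫⁻ p, c₁ p.1 p.2 ∂(π.map (Prod.map Prod.fst Prod.fst)) +
            ∫⁻ p, c₂ p.1 p.2 ∂(π.map (Prod.map Prod.snd Prod.snd)) :=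
          add_le_add (wassersteinCost_le_lintegral _ hπ₁) (wassersteinCost_le_lintegral _ hπ₂)
      _ ≤ ∫⁻ p, c₁ p.1.1 p.2.1 ∂π + ∫⁻ p, c₂ p.1.2 p.2.2 ∂π :=
          add_le_add (lintegral_map_le _ _) (lintegral_map_le _ _)
      _ ≤ _ := le_lintegral_add _ _

theorem wasserstein_product_decomposition_general (d₁ d₂ : ℕ)
    (μ₁ ν₁ : Measure (EuclideanSpace ℝ (Fin d₁)))
    (μ₂ ν₂ : Measure (EuclideanSpace ℝ (Fin d₂)))
    [IsProbabilityMeasure μ₁] [IsProbabilityMeasure ν₁]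
    [IsProbabilityMeasure μ₂] [IsProbabilityMeasure ν₂] :
    wassersteinCost
        (fun p q : EuclideanSpace ℝ (Fin d₁) × EuclideanSpace ℝ (Fin d₂) =>
          edist p.1 q.1 + edist p.2 q.2)
        (μ₁.prod μ₂) (ν₁.prod ν₂) =
      wassersteinCost (fun x y => edist x y) μ₁ ν₁ +
        wassersteinCost (fun x y => edist x y) μ₂ ν₂ :=
  wassersteinCost_prod measurable_edist measurable_edist μ₁ ν₁ μ₂ ν₂

/-- For product measures `μ₁ ⊗ μ₂` and `ν₁ ⊗ ν₂` with finite first moments,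
the 1-Wasserstein distance with cost `c((x₁,x₂),(y₁,y₂)) = edist x₁ y₁ + edist x₂ y₂`
decomposes as the sum of the factor Wasserstein distances. -/
theorem wasserstein_product_decomposition (d₁ d₂ : ℕ)
    (μ₁ ν₁ : Measure (EuclideanSpace ℝ (Fin d₁)))
    (μ₂ ν₂ : Measure (EuclideanSpace ℝ (Fin d₂)))
    [IsProbabilityMeasure μ₁] [IsProbabilityMeasure ν₁]
    [IsProbabilityMeasure μ₂] [IsProbabilityMeasure ν₂]
    (hμ₁ : ∫⁻ x, ‖x‖₊ ∂μ₁ < ⊤) (hν₁ : ∫⁻ x, ‖x‖₊ ∂ν₁ < ⊤)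
    (hμ₂ : ∫⁻ x, ‖x‖₊ ∂μ₂ < ⊤) (hν₂ : ∫⁻ x, ‖x‖₊ ∂ν₂ < ⊤) :
    wassersteinCost
        (fun p q : EuclideanSpace ℝ (Fin d₁) × EuclideanSpace ℝ (Fin d₂) =>
          edist p.1 q.1 + edist p.2 q.2)
        (μ₁.prod μ₂) (ν₁.prod ν₂) =
      wassersteinCost (fun x y => edist x y) μ₁ ν₁ +
        wassersteinCost (fun x y => edist x y) μ₂ ν₂ :=
  wasserstein_product_decomposition_general d₁ d₂ μ₁ ν₁ μ₂ ν₂
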